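/- Let q, β > 0, 0 < α < 1, n ∈ ℕ with n^{1-α} > 2, r ∈ ℕ, and f : ℝ → ℝ bounded and continuous. Then for the r-fold iterate B_n^r, we have ‖B_n^r(f) - f‖_∞ ≤ r·‖B_n(f) - f‖_∞ ≤ r·[ω(f, n^{-α}) + 2(q + 1/q)‖f‖_∞·e^{-β(n^{1-α} - 1)}]. -/

import Mathlib

open MeasureTheory Filter Real

noncomputable def nu (q β x : ℝ) : ℝ :=
  (1 - q * Real.exp (-β * x)) / (1 + q * Real.exp (-β * x))

noncomputable def G (q β x : ℝ) : ℝ := (1/4) * (nu q β (x+1) - nu q β (x-1))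

noncomputable def Psi (q β x : ℝ) : ℝ := (G q β x + G (1/q) β x) / 2

noncomputable def omega (f : ℝ → ℝ) (θ : ℝ) : ℝ :=
  sSup {d : ℝ | ∃ x y : ℝ, |x - y| ≤ θ ∧ d = |f x - f y|}

noncomputable def supNorm (f : ℝ → ℝ) : ℝ := ⨆ x : ℝ, |f x|

noncomputable def B (q β : ℝ) (n : ℕ) (f : ℝ → ℝ) (x : ℝ) : ℝ :=
  ∫ v : ℝ, f (v / n) * Psi q β ((n : ℝ) * x - v)

/-!
`Ψ` is a probability density: it is nonnegative because `ν_q` is increasing, and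
`x + (2/β) log (1 + q e^{-βx})` is an antiderivative of `ν_q`, which yields an antiderivative of `Ψ`
that is odd and tends to `1/2` at `+∞`. The same antiderivative gives the tail bound
`∫_{|u| > T} Ψ ≤ (q + 1/q) e^{-β(T-1)}`.

After the substitution `v = n x - u`, `B_n g x = ∫ g (x - u/n) Ψ(u) du`, so `B_n` is a linear
contraction for the sup norm, and `B_n^{k+1} f - f = B_n (B_n^k f - f) + (B_n f - f)` gives the
first inequality by induction. For the second, split the integral of `(f (x - u/n) - f x) Ψ(u)` at
`|u| = n^{1-α}`: inside, `|u/n| ≤ n^{-α}`, so the integrand is at most `ω(f, n^{-α}) Ψ(u)`;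
outside it is at most `2 ‖f‖ Ψ(u)`, and the tail bound applies.
-/

open Topology

section Modulus

variable {f : ℝ → ℝ} {M : ℝ}

lemma abs_le_supNorm (hM : ∀ y, |f y| ≤ M) (x : ℝ) : |f x| ≤ supNorm f :=
  le_ciSup ⟨M, by rintro _ ⟨y, rfl⟩; exact hM y⟩ x

lemma abs_sub_le_omega (hM : ∀ y, |f y| ≤ M) {θ x y : ℝ} (h : |x - y| ≤ θ) :
    |f x - f y| ≤ omega f θ := by
  refine le_csSup ⟨2 * M, ?_⟩ ⟨x, y, h, rfl⟩
  rintro _ ⟨a, b, -, rfl⟩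
  linarith [abs_sub (f a) (f b), hM a, hM b]

lemma omega_nonneg (hM : ∀ y, |f y| ≤ M) {θ : ℝ} (hθ : 0 ≤ θ) : 0 ≤ omega f θ :=
  (abs_nonneg _).trans (abs_sub_le_omega hM (x := 0) (y := 0) (by simpa using hθ))

end Modulus

noncomputable def kernelOp (K : ℝ → ℝ) (t : ℝ) (g : ℝ → ℝ) (x : ℝ) : ℝ :=
  ∫ u, g (x - t * u) * K u

section KernelOp

variable {K f g : ℝ → ℝ} {t M : ℝ}

lemma integrable_kernelOp_integrand (hK : Integrable K) (hg : Continuous g)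
    (hM : ∀ y, |g y| ≤ M) (x : ℝ) : Integrable (fun u => g (x - t * u) * K u) :=
  hK.bdd_mul (by fun_prop : Continuous fun u => g (x - t * u)).aestronglyMeasurable
    (ae_of_all _ fun _ => hM _)

lemma kernelOp_sub (x : ℝ) (h₁ : Integrable (fun u => f (x - t * u) * K u))
    (h₂ : Integrable (fun u => g (x - t * u) * K u)) :
    kernelOp K t (f - g) x = kernelOp K t f x - kernelOp K t g x := by
  rw [kernelOp, kernelOp, kernelOp, ← integral_sub h₁ h₂]
  simp only [Pi.sub_apply, sub_mul]

lemma abs_kernelOp_le (hK₀ : ∀ u, 0 ≤ K u) (hK : Integrable K) (hK₁ : ∫ u, K u = 1)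
    (hM : ∀ y, |g y| ≤ M) (x : ℝ) : |kernelOp K t g x| ≤ M := by
  have hbound (u : ℝ) : ‖g (x - t * u) * K u‖ ≤ M * K u := by
    rw [norm_mul, Real.norm_of_nonneg (hK₀ u)]
    exact mul_le_mul_of_nonneg_right (hM _) (hK₀ u)
  have := norm_integral_le_of_norm_le (hK.const_mul M) (ae_of_all _ hbound)
  rwa [integral_const_mul, hK₁, mul_one] at this

lemma continuous_kernelOp (hK : Integrable K) (hg : Continuous g) (hM : ∀ y, |g y| ≤ M) :
    Continuous (kernelOp K t g) :=
  continuous_of_dominated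
    (fun x => (integrable_kernelOp_integrand hK hg hM x).aestronglyMeasurable)
    (fun x => ae_of_all _ fun u => by
      rw [norm_mul, Real.norm_eq_abs]
      exact mul_le_mul_of_nonneg_right (hM _) (norm_nonneg _))
    (hK.norm.const_mul M) (ae_of_all _ fun u => by fun_prop)

lemma continuous_and_abs_le_iterate_kernelOp (hK₀ : ∀ u, 0 ≤ K u) (hK : Integrable K)
    (hK₁ : ∫ u, K u = 1)    (hf : Continuous f) (hM : ∀ y, |f y| ≤ M) (r : ℕ) :
    Continuous ((kernelOp K t)^[r] f) ∧ ∀ y, |(kernelOp K t)^[r] f y| ≤ M := by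
  induction r with
  | zero => exact ⟨hf, hM⟩
  | succ k ih =>
    rw [Function.iterate_succ_apply']
    exact ⟨continuous_kernelOp hK ih.1 ih.2, abs_kernelOp_le hK₀ hK hK₁ ih.2⟩

lemma abs_iterate_kernelOp_sub_le (hK₀ : ∀ u, 0 ≤ K u) (hK : Integrable K)
    (hK₁ : ∫ u, K u = 1) (hf : Continuous f) (hM : ∀ y, |f y| ≤ M) {D : ℝ}
    (hD : ∀ x, |kernelOp K t f x - f x| ≤ D) (r : ℕ) (x : ℝ) :
    |(kernelOp K t)^[r] f x - f x| ≤ r * D := by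
  induction r generalizing x with
  | zero => simp
  | succ k ih =>
    obtain ⟨hkc, hkM⟩ := continuous_and_abs_le_iterate_kernelOp (t := t) hK₀ hK hK₁ hf hM k
    have hsub := kernelOp_sub (t := t) x (integrable_kernelOp_integrand hK hkc hkM x)
      (integrable_kernelOp_integrand hK hf hM x)
    have hk := abs_kernelOp_le (t := t) hK₀ hK hK₁ (g := (kernelOp K t)^[k] f - f) ih x
    rw [hsub] at hk
    rw [Function.iterate_succ_apply']
    calc |kernelOp K t ((kernelOp K t)^[k] f) x - f x|
        ≤ |kernelOp K t ((kernelOp K t)^[k] f) x - kernelOp K t f x| + |kernelOp K t f x - f x| :=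
          abs_sub_le _ _ _
      _ ≤ k * D + D := add_le_add hk (hD x)
      _ = (k + 1 : ℕ) * D := by push_cast; ring

lemma abs_kernelOp_sub_le (hK₀ : ∀ u, 0 ≤ K u) (hK : Integrable K) (hK₁ : ∫ u, K u = 1)
    (hf : Continuous f) (hM : ∀ y, |f y| ≤ M) (ht : 0 ≤ t) {T : ℝ} (hT : 0 ≤ T) (x : ℝ) :
    |kernelOp K t f x - f x| ≤ omega f (t * T) + 2 * M * ∫ u in (Set.Icc (-T) T)ᶜ, K u := by
  set s := Set.Icc (-T) T
  set φ := fun u => |f (x - t * u) - f x| * K u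
  have hφ : Integrable φ := hK.bdd_mul (by fun_prop : Continuous _).aestronglyMeasurable
    (ae_of_all _ fun u => by
      rw [Real.norm_eq_abs, abs_abs]
      exact (abs_sub _ _).trans (by linarith [hM (x - t * u), hM x] : _ ≤ 2 * M))
  have hdiff : kernelOp K t f x - f x = ∫ u, (f (x - t * u) - f x) * K u := by
    simp only [sub_mul]
    rw [integral_sub (integrable_kernelOp_integrand hK hf hM x) (hK.const_mul _),
      integral_const_mul, hK₁, mul_one, kernelOp]
  have habs : |kernelOp K t f x - f x| ≤ ∫ u, φ u := by
    rw [hdiff]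
    refine (abs_integral_le_integral_abs).trans_eq (integral_congr_ae (ae_of_all _ fun u => ?_))
    simp only [φ, abs_mul, abs_of_nonneg (hK₀ u)]
  have hnear : ∫ u in s, φ u ≤ omega f (t * T) := by
    calc ∫ u in s, φ u ≤ ∫ u in s, omega f (t * T) * K u := by
          refine setIntegral_mono_on hφ.integrableOn (hK.const_mul _).integrableOn
            measurableSet_Icc fun u hu => mul_le_mul_of_nonneg_right ?_ (hK₀ u)
          refine abs_sub_le_omega hM ?_
          rw [sub_sub_cancel_left, abs_neg, abs_mul, abs_of_nonneg ht]
          exact mul_le_mul_of_nonneg_left (abs_le.2 hu) ht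
      _ = omega f (t * T) * ∫ u in s, K u := integral_const_mul _ _
      _ ≤ omega f (t * T) * 1 := by
          refine mul_le_mul_of_nonneg_left ?_ (omega_nonneg hM (mul_nonneg ht hT))
          exact hK₁ ▸ setIntegral_le_integral hK (ae_of_all _ hK₀)
      _ = omega f (t * T) := mul_one _
  have hfar : ∫ u in sᶜ, φ u ≤ 2 * M * ∫ u in sᶜ, K u := by
    rw [← integral_const_mul]
    refine setIntegral_mono_on hφ.integrableOn (hK.const_mul _).integrableOn
      measurableSet_Icc.compl fun u _ => mul_le_mul_of_nonneg_right ?_ (hK₀ u)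
    exact (abs_sub _ _).trans (by linarith [hM (x - t * u), hM x])
  linarith [integral_add_compl (measurableSet_Icc (a := -T) (b := T)) hφ]

end KernelOp

section Psi

variable {q β : ℝ}

lemma nu_eq_one_sub (hq : 0 < q) (x : ℝ) : nu q β x = 1 - 2 * q / (exp (β * x) + q) := by
  have : 0 < exp (β * x) + q := by positivity
  rw [nu, neg_mul, exp_neg]
  field_simp
  ring

lemma monotone_nu (hq : 0 < q) (hβ : 0 < β) : Monotone (nu q β) := by
  intro x y hxy
  simp only [nu_eq_one_sub hq]
  gcongr

lemma G_nonneg (hq : 0 < q) (hβ : 0 < β) (x : ℝ) : 0 ≤ G q β x := by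
  have := monotone_nu hq hβ (show x - 1 ≤ x + 1 by linarith)
  unfold G
  linarith

lemma Psi_nonneg (hq : 0 < q) (hβ : 0 < β) (x : ℝ) : 0 ≤ Psi q β x := by
  have := G_nonneg hq hβ x
  have := G_nonneg (one_div_pos.2 hq) hβ x
  unfold Psi
  linarith

lemma continuous_nu (hq : 0 < q) : Continuous (nu q β) :=
  Continuous.div (by fun_prop) (by fun_prop) fun x => by positivity

lemma continuous_Psi (hq : 0 < q) : Continuous (Psi q β) := by
  have := continuous_nu (β := β) hq
  have := continuous_nu (β := β) (one_div_pos.2 hq)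
  unfold Psi G
  fun_prop

noncomputable def nuAntideriv (q β x : ℝ) : ℝ := x + 2 / β * log (1 + q * exp (-β * x))

noncomputable def GAntideriv (q β u : ℝ) : ℝ :=
  (nuAntideriv q β (u + 1) - nuAntideriv q β (u - 1)) / 4

noncomputable def PsiAntideriv (q β u : ℝ) : ℝ := (GAntideriv q β u + GAntideriv (1/q) β u) / 2

lemma hasDerivAt_nuAntideriv (hq : 0 < q) (hβ : β ≠ 0) (x : ℝ) :
    HasDerivAt (nuAntideriv q β) (nu q β x) x := by
  have hpos : 0 < 1 + q * exp (-β * x) := by positivity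
  have h := (((((hasDerivAt_id x).const_mul (-β)).exp).const_mul q).const_add 1).log hpos.ne'
  refine ((hasDerivAt_id x).add (h.const_mul (2 / β))).congr_deriv ?_
  simp only [nu, id]
  field_simp
  ring

lemma hasDerivAt_GAntideriv (hq : 0 < q) (hβ : β ≠ 0) (u : ℝ) :
    HasDerivAt (GAntideriv q β) (G q β u) u := by
  have h₁ := (hasDerivAt_nuAntideriv hq hβ (u + 1)).comp_add_const u 1
  have h₂ := (hasDerivAt_nuAntideriv hq hβ (u - 1)).comp_sub_const u 1
  refine ((h₁.sub h₂).div_const 4).congr_deriv ?_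
  rw [G]
  ring

lemma hasDerivAt_PsiAntideriv (hq : 0 < q) (hβ : β ≠ 0) (u : ℝ) :
    HasDerivAt (PsiAntideriv q β) (Psi q β u) u :=
  ((hasDerivAt_GAntideriv hq hβ u).add
    (hasDerivAt_GAntideriv (one_div_pos.2 hq) hβ u)).div_const 2

-- `1 + q e^{βx} = q e^{βx} (1 + q⁻¹ e^{-βx})`
lemma nuAntideriv_neg (hq : 0 < q) (hβ : β ≠ 0) (x : ℝ) :
    nuAntideriv q β (-x) = nuAntideriv (1/q) β x + 2 / β * log q := by
  have hfac : 1 + q * exp (-β * -x) = q * exp (β * x) * (1 + 1 / q * exp (-β * x)) := by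
    rw [show -β * -x = β * x by ring, neg_mul, exp_neg]
    field_simp
    ring
  rw [nuAntideriv, nuAntideriv, hfac, log_mul (by positivity) (by positivity),
    log_mul hq.ne' (exp_pos _).ne', log_exp]
  field_simp
  ring

lemma GAntideriv_neg (hq : 0 < q) (hβ : β ≠ 0) (u : ℝ) :
    GAntideriv q β (-u) = -GAntideriv (1/q) β u := by
  simp only [GAntideriv, show -u + 1 = -(u - 1) by ring, show -u - 1 = -(u + 1) by ring,
    nuAntideriv_neg hq hβ]
  ring

lemma PsiAntideriv_neg (hq : 0 < q) (hβ : β ≠ 0) (u : ℝ) :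
    PsiAntideriv q β (-u) = -PsiAntideriv q β u := by
  simp only [PsiAntideriv, GAntideriv_neg hq hβ, GAntideriv_neg (one_div_pos.2 hq) hβ,
    one_div_one_div]
  ring

lemma tendsto_nuAntideriv_sub_id (hβ : 0 < β) :
    Tendsto (fun x => nuAntideriv q β x - x) atTop (𝓝 0) := by
  have hexp : Tendsto (fun x => exp (-β * x)) atTop (𝓝 0) :=
    tendsto_exp_atBot.comp (tendsto_id.const_mul_atTop_of_neg (neg_neg_of_pos hβ))
  have hlog := ((continuousAt_log one_ne_zero).tendsto).comp
    (by simpa using (hexp.const_mul q).const_add 1)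
  simpa [nuAntideriv] using hlog.const_mul (2 / β)

lemma tendsto_GAntideriv_atTop (hβ : 0 < β) : Tendsto (GAntideriv q β) atTop (𝓝 (1/2)) := by
  have h₁ := (tendsto_nuAntideriv_sub_id (q := q) hβ).comp
    (tendsto_atTop_add_const_right _ 1 tendsto_id)
  have h₂ := (tendsto_nuAntideriv_sub_id (q := q) hβ).comp
    (tendsto_atTop_add_const_right _ (-1) tendsto_id)
  have h := ((h₁.sub h₂).const_add 2).div_const 4
  norm_num at h
  refine h.congr fun u => ?_
  simp only [GAntideriv, ← sub_eq_add_neg]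
  ring

lemma tendsto_PsiAntideriv_atTop (hβ : 0 < β) :
    Tendsto (PsiAntideriv q β) atTop (𝓝 (1/2)) := by
  rw [show (1/2 : ℝ) = (1/2 + 1/2) / 2 by norm_num]
  exact ((tendsto_GAntideriv_atTop hβ).add (tendsto_GAntideriv_atTop hβ)).div_const 2

lemma tendsto_PsiAntideriv_atBot (hq : 0 < q) (hβ : 0 < β) :
    Tendsto (PsiAntideriv q β) atBot (𝓝 (-(1/2))) := by
  have h := (tendsto_PsiAntideriv_atTop (q := q) hβ).neg.comp tendsto_neg_atBot_atTop
  refine h.congr fun u => ?_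
  simp [PsiAntideriv_neg hq hβ.ne']

lemma monotone_PsiAntideriv (hq : 0 < q) (hβ : 0 < β) : Monotone (PsiAntideriv q β) :=
  monotone_of_hasDerivAt_nonneg (hasDerivAt_PsiAntideriv hq hβ.ne') (Psi_nonneg hq hβ)

lemma intervalIntegral_Psi (hq : 0 < q) (hβ : 0 < β) (a b : ℝ) :
    ∫ u in a..b, Psi q β u = PsiAntideriv q β b - PsiAntideriv q β a :=
  intervalIntegral.integral_eq_sub_of_hasDerivAt (fun u _ => hasDerivAt_PsiAntideriv hq hβ.ne' u)
    ((continuous_Psi hq).intervalIntegrable _ _)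

lemma integrable_Psi (hq : 0 < q) (hβ : 0 < β) : Integrable (Psi q β) := by
  refine integrable_of_intervalIntegral_norm_bounded 1
    (fun i => (continuous_Psi hq).integrableOn_Ioc) tendsto_neg_atTop_atBot tendsto_id
    (Eventually.of_forall fun i => ?_)
  simp only [Real.norm_of_nonneg (Psi_nonneg hq hβ _), intervalIntegral_Psi hq hβ, id]
  have := (monotone_PsiAntideriv hq hβ).ge_of_tendsto (tendsto_PsiAntideriv_atTop hβ) i
  have := (monotone_PsiAntideriv hq hβ).le_of_tendsto (tendsto_PsiAntideriv_atBot hq hβ) (-i)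
  linarith

lemma integral_Psi (hq : 0 < q) (hβ : 0 < β) : ∫ u, Psi q β u = 1 := by
  rw [integral_of_hasDerivAt_of_tendsto (hasDerivAt_PsiAntideriv hq hβ.ne') (integrable_Psi hq hβ)
    (tendsto_PsiAntideriv_atBot hq hβ) (tendsto_PsiAntideriv_atTop hβ)]
  norm_num

lemma one_half_sub_GAntideriv_le (hq : 0 < q) (hβ : 0 < β) (T : ℝ) :
    1/2 - GAntideriv q β T ≤ q * exp (-β * (T - 1)) := by
  set a := q * exp (-β * (T - 1))
  set b := q * exp (-β * (T + 1))
  have ha : 0 < a := by positivity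
  have hb : 0 < b := by positivity
  have hba : b = a * exp (-(2 * β)) := by
    simp only [a, b, mul_assoc, ← exp_add]
    ring_nf
  have heq : 1/2 - GAntideriv q β T = (log (1 + a) - log (1 + b)) / (2 * β) := by
    simp only [GAntideriv, nuAntideriv, a, b]
    field_simp
    ring
  -- `log ((1 + a) / (1 + b)) ≤ (a - b) / (1 + b) ≤ a - b = a (1 - e^{-2β}) ≤ 2 β a`
  have hlog : log (1 + a) - log (1 + b) ≤ a - b := by
    rw [← log_div (by positivity) (by positivity)]
    refine (log_le_sub_one_of_pos (by positivity)).trans ?_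
    rw [div_sub_one (by positivity), add_sub_add_left_eq_sub]
    have : b ≤ a := by
      rw [hba]
      exact mul_le_of_le_one_right ha.le (exp_le_one_iff.2 (by linarith))
    exact div_le_self (by linarith) (by linarith)
  have hab : a - b ≤ 2 * β * a := by
    have := add_one_le_exp (-(2 * β))
    rw [hba]
    nlinarith
  rw [heq, div_le_iff₀ (by positivity)]
  linarith

lemma setIntegral_compl_Icc_Psi_le (hq : 0 < q) (hβ : 0 < β) {T : ℝ} (hT : 0 ≤ T) :
    ∫ u in (Set.Icc (-T) T)ᶜ, Psi q β u ≤ (q + 1/q) * exp (-β * (T - 1)) := by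
  have hsplit := integral_add_compl (measurableSet_Icc (a := -T) (b := T)) (integrable_Psi hq hβ)
  rw [integral_Psi hq hβ, integral_Icc_eq_integral_Ioc,
    ← intervalIntegral.integral_of_le (by linarith), intervalIntegral_Psi hq hβ,
    PsiAntideriv_neg hq hβ.ne'] at hsplit
  have h₁ := one_half_sub_GAntideriv_le hq hβ T
  have h₂ := one_half_sub_GAntideriv_le (one_div_pos.2 hq) hβ T
  simp only [PsiAntideriv] at hsplit
  linarith

end Psi

lemma B_eq_kernelOp {q β : ℝ} {n : ℕ} (hn : (n : ℝ) ≠ 0) :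
    B q β n = kernelOp (Psi q β) (n : ℝ)⁻¹ := by
  ext f x
  rw [B, kernelOp, ← integral_sub_left_eq_self _ volume ((n : ℝ) * x)]
  congr 1 with v
  field_simp
  ring_nf

theorem B_iterated_general (q β α : ℝ) (hq : 0 < q) (hβ : 0 < β)
    (n : ℕ) (hn : 2 < (n : ℝ) ^ (1 - α)) (r : ℕ)
    (f : ℝ → ℝ) (hf : Continuous f) (hfb : ∃ M : ℝ, ∀ x : ℝ, |f x| ≤ M) :
    supNorm (fun x => (B q β n)^[r] f x - f x) ≤
        r * supNorm (fun x => B q β n f x - f x) ∧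
    r * supNorm (fun x => B q β n f x - f x) ≤
      r * (omega f ((n : ℝ) ^ (-α)) +
        2 * (q + 1/q) * supNorm f * Real.exp (-β * ((n : ℝ) ^ (1 - α) - 1))) := by
  obtain ⟨M, hM⟩ := hfb
  have hn₀ : 0 < (n : ℝ) := by
    refine Nat.cast_pos.2 (Nat.pos_of_ne_zero fun h => ?_)
    rw [h, Nat.cast_zero] at hn
    linarith [zero_rpow_le_one (1 - α)]
  have hf' : ∀ y, |f y| ≤ supNorm f := abs_le_supNorm hM
  have hPsi₀ := Psi_nonneg hq hβ
  have hPsi := integrable_Psi hq hβ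
  have hPsi₁ := integral_Psi hq hβ
  rw [B_eq_kernelOp hn₀.ne']
  have hBf (x : ℝ) : |kernelOp (Psi q β) (n : ℝ)⁻¹ f x - f x| ≤ 2 * supNorm f :=
    (abs_sub _ _).trans
      (by linarith [abs_kernelOp_le (t := (n : ℝ)⁻¹) hPsi₀ hPsi hPsi₁ hf' x, hf' x])
  have hscale : (n : ℝ)⁻¹ * (n : ℝ) ^ (1 - α) = (n : ℝ) ^ (-α) := by
    rw [← rpow_neg_one, ← rpow_add hn₀]
    ring_nf
  refine ⟨ciSup_le fun x =>
      abs_iterate_kernelOp_sub_le hPsi₀ hPsi hPsi₁ hf hf' (abs_le_supNorm hBf) r x,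
    mul_le_mul_of_nonneg_left (ciSup_le fun x => ?_) r.cast_nonneg⟩
  have hT : 0 ≤ (n : ℝ) ^ (1 - α) := by positivity
  have hnear_far := abs_kernelOp_sub_le hPsi₀ hPsi hPsi₁ hf hf' (inv_nonneg.2 hn₀.le) hT x
  have htail := setIntegral_compl_Icc_Psi_le hq hβ hT
  rw [hscale] at hnear_far
  have hf₀ : 0 ≤ 2 * supNorm f := by linarith [hf' 0, abs_nonneg (f 0)]
  have := mul_le_mul_of_nonneg_left htail hf₀
  linarith

theorem B_iterated (q β α : ℝ) (hq : 0 < q) (hβ : 0 < β)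
    (hα0 : 0 < α) (hα1 : α < 1) (n : ℕ) (hn : 2 < (n : ℝ) ^ (1 - α)) (r : ℕ)
    (f : ℝ → ℝ) (hf : Continuous f) (hfb : ∃ M : ℝ, ∀ x : ℝ, |f x| ≤ M) :
    supNorm (fun x => (B q β n)^[r] f x - f x) ≤
        r * supNorm (fun x => B q β n f x - f x) ∧
    r * supNorm (fun x => B q β n f x - f x) ≤
      r * (omega f ((n : ℝ) ^ (-α)) +
        2 * (q + 1/q) * supNorm f * Real.exp (-β * ((n : ℝ) ^ (1 - α) - 1))) :=
  B_iterated_general q β α hq hβ n hn r f hf hfb
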